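/- arXiv:0810.0736 — 2 statements merged into one kernel-verified Lean document; each statement's English description precedes it below -/
import Mathlib

section
/- Let F : X ⥤ Y and G : Z ⥤ Y be functors between groupoids, with F an equivalence of categories. Then the projection functor p : X ×_Y Z ⥤ Z from the weak fibered product, given on objects by (x, φ, z) ↦ z and on morphisms by (h, φ, k) ↦ k, is an equivalence of categories. -/
open CategoryTheory

/-- If `F : X ⥤ Y` is an equivalence of groupoids and `G : Z ⥤ Y` is any functor, then the
projection from the weak fibered product (the comma category) `X ×_Y Z ⥤ Z`,
`(x, φ, z) ↦ z`, is an equivalence of categories. -/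
theorem stmt_3 {X Y Z : Type*} [Groupoid X] [Groupoid Y] [Groupoid Z]
    (F : X ⥤ Y) (G : Z ⥤ Y) [F.IsEquivalence] :
    (Comma.snd F G).IsEquivalence := by
  have full : (Comma.snd F G).Full := by
    constructor
    intro a b k
    refine ⟨⟨F.preimage (a.hom ≫ G.map k ≫ Groupoid.inv b.hom), k, ?_⟩, rfl⟩
    simp [Functor.map_preimage]
  have faithful : (Comma.snd F G).Faithful := by
    constructor
    intro a b f g h
    have : F.map f.left ≫ b.hom = F.map g.left ≫ b.hom := by
      rw [f.w, g.w]
      simp only [Comma.snd_map] at h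
      rw [h]
    have hl : f.left = g.left := F.map_injective ((cancel_mono b.hom).mp this)
    ext
    · exact hl
    · simpa using h
  have essSurj : (Comma.snd F G).EssSurj := by
    constructor
    intro z
    obtain ⟨x, ⟨e⟩⟩ := Functor.EssSurj.mem_essImage (F := F) (G.obj z)
    exact ⟨⟨x, z, e.hom⟩, ⟨Iso.refl z⟩⟩
  exact { }
end

section
/- Let F : X ⥤ Y be an equivalence of groupoids such that F induces a bijection on isotropy groups at every object. Then for every object a = (x, φ, z) of the weak fibered product X ×_Y Z (for any functor G : Z ⥤ Y), the projection p : X ×_Y Z ⥤ Z induces a bijection between the isotropy group of a and the isotropy group of z. -/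
open CategoryTheory

/-- If `F : X ⥤ Y` is an equivalence of groupoids inducing a bijection on isotropy groups at
every object, then for every object `a = (x, φ, z)` of the weak fibered product `X ×_Y Z`
(the comma category `Comma F G`), the projection to `Z` induces a bijection between the
isotropy group of `a` and the isotropy group of `z`, via `(h, φ, k) ↦ k`. -/
theorem stmt_4 {X Y Z : Type*} [Groupoid X] [Groupoid Y] [Groupoid Z]
    (F : X ⥤ Y) (G : Z ⥤ Y) [F.IsEquivalence]
    (hiso : ∀ x : X, Function.Bijective (fun h : x ⟶ x => F.map h))
    (a : Comma F G) :
    Function.Bijective (fun f : a ⟶ a => f.right) := by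
  constructor
  · intro f g hfg
    simp only at hfg
    refine CommaMorphism.ext ?_ hfg
    apply (hiso a.left).1
    have hf := f.w
    have hg := g.w
    rw [hfg] at hf
    exact (cancel_mono a.hom).mp (hf.trans hg.symm)
  · intro k
    obtain ⟨h, hh⟩ := (hiso a.left).2 (a.hom ≫ G.map k ≫ Groupoid.inv a.hom)
    refine ⟨⟨h, k, ?_⟩, rfl⟩
    simp only at hh
    rw [hh]
    simp
end
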